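/- Block equivalence lies between trace equivalence and reads-from equivalence: for all runs u,v in which every read event is preceded by a write event on the same variable, u ≡_M v implies u ≡_B v, and u ≡_B v implies u ≡_rf v. -/
import Mathlib


namespace TraceTheory

inductive Op : Type
  | rd : Op
  | wr : Op
deriving DecidableEq

structure Lbl (T X : Type) : Type where
  thread : T
  op : Op
  var : X
deriving DecidableEq

/-- A concurrent program run: a finite string over the concurrent alphabet. -/
abbrev Run (T X : Type) := List (Lbl T X)

/-- An event of a run: a symbol together with its occurrence number. -/
abbrev Event (T X : Type) := Lbl T X × ℕ

variable {T X : Type} [DecidableEq T] [DecidableEq X]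

/-- Dependence: same thread, or same variable with at least one write. -/
def Dep (a b : Lbl T X) : Prop :=
  a.thread = b.thread ∨ (a.var = b.var ∧ (a.op = Op.wr ∨ b.op = Op.wr))

/-- The event at position `i` of run `w`. -/
def evAt (w : Run T X) (i : Fin w.length) : Event T X :=
  (w.get i, (w.take (i : ℕ)).count (w.get i))

def HasEv (w : Run T X) (e : Event T X) : Prop := ∃ i : Fin w.length, evAt w i = e

/-- `e` occurs (strictly) before `f` in `w`. -/
def EvBefore (w : Run T X) (e f : Event T X) : Prop :=
  ∃ i j : Fin w.length, (i : ℕ) < (j : ℕ) ∧ evAt w i = e ∧ evAt w j = f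

/-- Program order. -/
def po (w : Run T X) (e f : Event T X) : Prop :=
  e.1.thread = f.1.thread ∧ EvBefore w e f

/-- Reads-from: `f` is a read that observes the write `e` (the last write on
the same variable before `f`). -/
def rf (w : Run T X) (e f : Event T X) : Prop :=
  e.1.op = Op.wr ∧ f.1.op = Op.rd ∧ e.1.var = f.1.var ∧
  ∃ i j : Fin w.length, evAt w i = e ∧ evAt w j = f ∧ (i : ℕ) < (j : ℕ) ∧
    ∀ k : Fin w.length, (i : ℕ) < (k : ℕ) → (k : ℕ) < (j : ℕ) →
      ¬ ((w.get k).op = Op.wr ∧ (w.get k).var = f.1.var)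

/-- Every read is preceded by a write on the same variable. -/
def WellFormed (w : Run T X) : Prop :=
  ∀ j : Fin w.length, (w.get j).op = Op.rd →
    ∃ i : Fin w.length, (i : ℕ) < (j : ℕ) ∧ (w.get i).op = Op.wr ∧
      (w.get i).var = (w.get j).var

/-- Reads-from equivalence. -/
def RfEquiv (w w' : Run T X) : Prop :=
  w.Perm w' ∧ po w = po w' ∧ rf w = rf w'

/-- A single Mazurkiewicz swap of two adjacent independent symbols. -/
inductive MazSwap : Run T X → Run T X → Prop
  | swap (u v : Run T X) (a b : Lbl T X) (h : ¬ Dep a b) :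
      MazSwap (u ++ a :: b :: v) (u ++ b :: a :: v)

/-- Trace (Mazurkiewicz) equivalence: the smallest equivalence closed under swaps. -/
def MazEquiv (w w' : Run T X) : Prop := Relation.EqvGen MazSwap w w'

/-- The trace (happens-before) partial order of a run. -/
def MazOrder (w : Run T X) : Event T X → Event T X → Prop :=
  Relation.TransGen (fun e f => EvBefore w e f ∧ Dep e.1 f.1)

/-- `B` is a block word (one write followed by reads of the same variable) that is
valid as a contiguous segment whose suffix (remainder of the run) is `s`:
no read after the block reads from the block's write. -/
def ValidBlockSeg (B s : Run T X) : Prop :=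
  ∃ a rest, B = a :: rest ∧ a.op = Op.wr ∧
    (∀ b ∈ rest, b.op = Op.rd ∧ b.var = a.var) ∧
    ∀ j : Fin s.length, (s.get j).op = Op.rd → (s.get j).var = a.var →
      ∃ m : Fin s.length, (m : ℕ) < (j : ℕ) ∧ (s.get m).op = Op.wr ∧
        (s.get m).var = a.var

def ThreadsDisjoint (B B' : Run T X) : Prop :=
  ∀ a ∈ B, ∀ b ∈ B', a.thread ≠ b.thread

/-- A single block-equivalence step (clause (i): block swap, clause (ii): event swap). -/
inductive BlkSwap : Run T X → Run T X → Prop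
  | block (p B B' s : Run T X) (hB : ValidBlockSeg B (B' ++ s)) (hB' : ValidBlockSeg B' s)
      (hd : ThreadsDisjoint B B') :
      BlkSwap (p ++ B ++ B' ++ s) (p ++ B' ++ B ++ s)
  | single (p s : Run T X) (a b : Lbl T X) (ht : a.thread ≠ b.thread)
      (h : a.var ≠ b.var ∨ (a.op = Op.rd ∧ b.op = Op.rd)) :
      BlkSwap (p ++ a :: b :: s) (p ++ b :: a :: s)

/-- Block equivalence: smallest reflexive transitive relation closed under the swaps. -/
def BlkEquiv : Run T X → Run T X → Prop := Relation.ReflTransGen BlkSwap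

/-- The set of events of the segment `B` of a run, given the prefix `p` preceding it. -/
def segEvents (p B : Run T X) : Set (Event T X) :=
  { e | ∃ i : Fin B.length, e = (B.get i, ((p ++ B.take (i : ℕ)).count (B.get i))) }

/-- Block-equivalence steps where block swaps are restricted to blocks from `𝔹`. -/
inductive BlkSwapIn (𝔹 : Set (Set (Event T X))) : Run T X → Run T X → Prop
  | block (p B B' s : Run T X) (hB : ValidBlockSeg B (B' ++ s)) (hB' : ValidBlockSeg B' s)
      (hBmem : segEvents p B ∈ 𝔹) (hB'mem : segEvents (p ++ B) B' ∈ 𝔹)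
      (hd : ThreadsDisjoint B B') :
      BlkSwapIn 𝔹 (p ++ B ++ B' ++ s) (p ++ B' ++ B ++ s)
  | single (p s : Run T X) (a b : Lbl T X) (ht : a.thread ≠ b.thread)
      (h : a.var ≠ b.var ∨ (a.op = Op.rd ∧ b.op = Op.rd)) :
      BlkSwapIn 𝔹 (p ++ a :: b :: s) (p ++ b :: a :: s)

/-- Block equivalence restricted to the set of blocks `𝔹`. -/
def BlkEquivIn (𝔹 : Set (Set (Event T X))) : Run T X → Run T X → Prop :=
  Relation.ReflTransGen (BlkSwapIn 𝔹)

/-- A valid block of `w` (as a set of events): a write event together with exactly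
the reads of `w` that read from it. -/
def IsValidBlockOf (w : Run T X) (S : Set (Event T X)) : Prop :=
  ∃ e : Event T X, HasEv w e ∧ e.1.op = Op.wr ∧ S = insert e { f | rf w e f }

def ValidBlocks (w : Run T X) (𝔹 : Set (Set (Event T X))) : Prop :=
  ∀ S ∈ 𝔹, IsValidBlockOf w S

/-- Block `S` occurs as a contiguous subword of `u`. -/
def SerialIn (u : Run T X) (S : Set (Event T X)) : Prop :=
  ∃ p B s, u = p ++ B ++ s ∧ segEvents p B = S

/-- Liberal atomicity of a run `v` with respect to a set of blocks `𝔹`. -/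
def LiberallyAtomic (v : Run T X) (𝔹 : Set (Set (Event T X))) : Prop :=
  ∃ u, BlkEquivIn 𝔹 u v ∧ ∀ S ∈ 𝔹, SerialIn u S

/-- Conflict serializability of a run `v` with respect to a set of blocks `𝔹`. -/
def ConflictSerializable (v : Run T X) (𝔹 : Set (Set (Event T X))) : Prop :=
  ∃ u, MazEquiv u v ∧ ∀ S ∈ 𝔹, SerialIn u S

/-- The block-happens-before order `≺_𝔹`. -/
def Bhb (w : Run T X) (𝔹 : Set (Set (Event T X))) : Event T X → Event T X → Prop :=
  Relation.TransGen (fun e f =>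
    EvBefore w e f ∧ Dep e.1 f.1 ∧
    ¬ (e.1.thread ≠ f.1.thread ∧ ∃ B ∈ 𝔹, ∃ B' ∈ 𝔹, B ≠ B' ∧ e ∈ B ∧ f ∈ B'))

/-- The saturated order `⪻_𝔹` on events (`Sum.inl`) and blocks (`Sum.inr`). -/
inductive Sat (w : Run T X) (𝔹 : Set (Set (Event T X))) :
    (Event T X ⊕ Set (Event T X)) → (Event T X ⊕ Set (Event T X)) → Prop
  | base {e f : Event T X} : Bhb w 𝔹 e f → Sat w 𝔹 (Sum.inl e) (Sum.inl f)
  | toBlk {e f : Event T X} {B B' : Set (Event T X)} :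
      e.1.var = f.1.var → B ∈ 𝔹 → B' ∈ 𝔹 → e ∈ B → f ∈ B' → B ≠ B' →
      Sat w 𝔹 (Sum.inl e) (Sum.inl f) → Sat w 𝔹 (Sum.inr B) (Sum.inr B')
  | ofBlk {B B' : Set (Event T X)} {e f : Event T X} :
      Sat w 𝔹 (Sum.inr B) (Sum.inr B') → e ∈ B → f ∈ B' →
      Sat w 𝔹 (Sum.inl e) (Sum.inl f)

/-- The event part of the saturated order `⪻_𝔹`. -/
def SatEv (w : Run T X) (𝔹 : Set (Set (Event T X))) (e f : Event T X) : Prop :=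
  Sat w 𝔹 (Sum.inl e) (Sum.inl f)

def SameVarBlocks (B B' : Set (Event T X)) : Prop :=
  ∃ x : X, (∀ e ∈ B, e.1.var = x) ∧ (∀ e ∈ B', e.1.var = x)

/-- No two distinct blocks of `𝔹` on the same variable overlap in `v`. -/
def NoOverlap (v : Run T X) (𝔹 : Set (Set (Event T X))) : Prop :=
  ∀ B ∈ 𝔹, ∀ B' ∈ 𝔹, B ≠ B' → SameVarBlocks B B' →
    (∀ e ∈ B, ∀ f ∈ B', EvBefore v e f) ∨ (∀ e ∈ B, ∀ f ∈ B', EvBefore v f e)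

/-- `v` is a proper linearization (of the events of `w`) of the order `ord`. -/
def ProperLin (w : Run T X) (𝔹 : Set (Set (Event T X)))
    (ord : Event T X → Event T X → Prop) (v : Run T X) : Prop :=
  w.Perm v ∧ (∀ e f, ord e f → EvBefore v e f) ∧ NoOverlap v 𝔹


/-- `e` is causally ordered before `f` under reads-from equivalence:
`e` occurs before `f` in every reads-from equivalent run. -/
def CausOrd (w : Run T X) (e f : Event T X) : Prop :=
  ∀ w', RfEquiv w w' → EvBefore w' e f

/-- `e` and `f` are causally concurrent under reads-from equivalence. -/
def CausConc (w : Run T X) (e f : Event T X) : Prop :=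
  ¬ CausOrd w e f ∧ ¬ CausOrd w f e


section SemanticSoundness

/-! ### Auxiliary infrastructure for Statement 4 -/


def sig (P m m' i : ℕ) : ℕ :=
  if i < P then i else if i < P + m then i + m' else if i < P + m + m' then i - m else i

lemma sig_lt {P m m' n : ℕ} (hn : P + m + m' ≤ n) {i : ℕ} (h : i < n) :
    sig P m m' i < n := by
  simp only [sig]; split_ifs <;> omega

lemma sig_sig {P m m' : ℕ} (i : ℕ) : sig P m' m (sig P m m' i) = i := by
  simp only [sig]; split_ifs <;> omega

lemma sig_mono {P m m' i j : ℕ} (hij : i < j)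
    (h : ¬(P ≤ i ∧ i < P + m ∧ P + m ≤ j ∧ j < P + m + m')) :
    sig P m m' i < sig P m m' j := by
  simp only [sig]; split_ifs <;> omega

lemma sig_A {P m m' i : ℕ} (h : i < P) : sig P m m' i = i := by
  simp only [sig]; split_ifs <;> omega
lemma sig_B {P m m' i : ℕ} (h1 : P ≤ i) (h2 : i < P + m) : sig P m m' i = i + m' := by
  simp only [sig]; split_ifs <;> omega
lemma sig_C {P m m' i : ℕ} (h1 : P + m ≤ i) (h2 : i < P + m + m') : sig P m m' i = i - m := by
  simp only [sig]; split_ifs <;> omega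
lemma sig_S {P m m' i : ℕ} (h : P + m + m' ≤ i) : sig P m m' i = i := by
  simp only [sig]; split_ifs <;> omega

variable {α : Type*}

lemma gec {l : List α} {i j : ℕ} (hij : i = j) {hi : i < l.length} {hj : j < l.length} :
    l[i]'hi = l[j]'hj := by subst hij; rfl

lemma quad_len (p B C s : List α) :
    (p ++ B ++ C ++ s).length = p.length + B.length + C.length + s.length := by
  simp [Nat.add_assoc]

lemma quad_get_A (p B C s : List α) {i : ℕ} (h : i < p.length)
    (hi : i < (p ++ B ++ C ++ s).length) :
    (p ++ B ++ C ++ s)[i] = p[i] := by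
  simp only [List.getElem_append, List.length_append]
  split_ifs <;> first | (exfalso; omega) | exact gec (by omega)

lemma quad_get_B (p B C s : List α) {i : ℕ} (h1 : p.length ≤ i) (h2 : i < p.length + B.length)
    (hi : i < (p ++ B ++ C ++ s).length) :
    (p ++ B ++ C ++ s)[i] = B[i - p.length]'(by omega) := by
  simp only [List.getElem_append, List.length_append]
  split_ifs <;> first | (exfalso; omega) | exact gec (by omega)

lemma quad_get_C (p B C s : List α) {i : ℕ} (h1 : p.length + B.length ≤ i)
    (h2 : i < p.length + B.length + C.length)
    (hi : i < (p ++ B ++ C ++ s).length) :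
    (p ++ B ++ C ++ s)[i] = C[i - p.length - B.length]'(by omega) := by
  simp only [List.getElem_append, List.length_append]
  split_ifs <;> first | (exfalso; omega) | exact gec (by omega)

lemma quad_get_S (p B C s : List α) {i : ℕ} (h1 : p.length + B.length + C.length ≤ i)
    (hi : i < (p ++ B ++ C ++ s).length) :
    (p ++ B ++ C ++ s)[i] = s[i - p.length - B.length - C.length]'(by
      rw [quad_len] at hi; omega) := by
  simp only [List.getElem_append, List.length_append]
  split_ifs <;> first | (exfalso; omega) | exact gec (by omega)

lemma quad_get_CS (p B C s : List α) {i : ℕ} (h1 : p.length + B.length ≤ i)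
    (hi : i < (p ++ B ++ C ++ s).length) :
    (p ++ B ++ C ++ s)[i] = (C ++ s)[i - p.length - B.length]'(by
      rw [quad_len] at hi; simp; omega) := by
  simp only [List.getElem_append, List.length_append]
  split_ifs <;> first | (exfalso; omega) | exact gec (by omega)

lemma quad_take (p B C s : List α) (i : ℕ) :
    (p ++ B ++ C ++ s).take i =
      p.take i ++ B.take (i - p.length) ++ C.take (i - p.length - B.length)
        ++ s.take (i - p.length - B.length - C.length) := by
  simp [List.take_append, Nat.sub_sub]

lemma len_swap (p B C s : List α) :
    (p ++ C ++ B ++ s).length = (p ++ B ++ C ++ s).length := by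
  rw [quad_len, quad_len]; omega

lemma getElem_swap (p B C s : List α) (i : ℕ) (hi : i < (p ++ B ++ C ++ s).length) :
    (p ++ C ++ B ++ s)[sig p.length B.length C.length i]'(by
        rw [len_swap]; exact sig_lt (by rw [quad_len]; omega) hi) =
      (p ++ B ++ C ++ s)[i] := by
  have hn := quad_len p B C s
  rcases lt_or_ge i p.length with h | h
  · exact (gec (sig_A h)).trans
      ((quad_get_A p C B s h (by rw [quad_len]; omega)).trans (quad_get_A p B C s h hi).symm)
  rcases lt_or_ge i (p.length + B.length) with h2 | h2
  · refine (gec (sig_B h h2) (hj := by rw [len_swap, quad_len]; omega)).trans ?_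
    rw [quad_get_C p C B s (by omega) (by omega), quad_get_B p B C s h h2]
    exact gec (by omega)
  rcases lt_or_ge i (p.length + B.length + C.length) with h3 | h3
  · refine (gec (sig_C h2 h3) (hj := by rw [len_swap, quad_len]; omega)).trans ?_
    rw [quad_get_B p C B s (by omega) (by omega), quad_get_C p B C s h2 h3]
    exact gec (by omega)
  · refine (gec (sig_S h3) (hj := by rw [len_swap, quad_len]; omega)).trans ?_
    rw [quad_get_S p C B s (by omega), quad_get_S p B C s h3]
    exact gec (by omega)

variable [DecidableEq α]

lemma count_take_swap (p B C s : List α) (hBC : ∀ a ∈ B, a ∉ C) (hCB : ∀ a ∈ C, a ∉ B)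
    (i : ℕ) (hi : i < (p ++ B ++ C ++ s).length) :
    ((p ++ C ++ B ++ s).take (sig p.length B.length C.length i)).count
        ((p ++ B ++ C ++ s)[i]) =
      ((p ++ B ++ C ++ s).take i).count ((p ++ B ++ C ++ s)[i]) := by
  have hn := quad_len p B C s
  set a := (p ++ B ++ C ++ s)[i] with ha
  rcases lt_or_ge i p.length with h | h
  · rw [sig_A h, quad_take, quad_take, show i - p.length = 0 by omega]
    simp
  rcases lt_or_ge i (p.length + B.length) with h2 | h2
  · have haB : a ∈ B := by
      rw [ha, quad_get_B p B C s h h2]; exact List.getElem_mem _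
    rw [sig_B h h2, quad_take, quad_take,
      List.take_of_length_le (show p.length ≤ i + C.length by omega),
      List.take_of_length_le (show C.length ≤ i + C.length - p.length by omega),
      show i + C.length - p.length - C.length = i - p.length by omega,
      show i - p.length - B.length = 0 by omega,
      List.take_of_length_le (show p.length ≤ i by omega)]
    simp [List.count_append, List.count_eq_zero.2 (hBC a haB)]
  rcases lt_or_ge i (p.length + B.length + C.length) with h3 | h3
  · have haC : a ∈ C := by
      rw [ha, quad_get_C p B C s h2 h3]; exact List.getElem_mem _
    rw [sig_C h2 h3, quad_take, quad_take,
      List.take_of_length_le (show p.length ≤ i - B.length by omega),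
      show i - B.length - p.length = i - p.length - B.length by omega,
      show i - p.length - B.length - C.length = 0 by omega,
      List.take_of_length_le (show p.length ≤ i by omega),
      List.take_of_length_le (show B.length ≤ i - p.length by omega)]
    simp [List.count_append, List.count_eq_zero.2 (hCB a haC)]
  · rw [sig_S h3, quad_take, quad_take,
      List.take_of_length_le (show p.length ≤ i by omega),
      List.take_of_length_le (show B.length ≤ i - p.length by omega),
      List.take_of_length_le (show C.length ≤ i - p.length by omega),
      List.take_of_length_le (show C.length ≤ i - p.length - B.length by omega),
      List.take_of_length_le (show B.length ≤ i - p.length - C.length by omega),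
      show i - p.length - C.length - B.length = i - p.length - B.length - C.length by omega]
    simp [List.count_append]; omega


lemma sig_lt' (p B C s : List α) {i : ℕ} (hi : i < (p ++ B ++ C ++ s).length) :
    sig p.length B.length C.length i < (p ++ C ++ B ++ s).length :=
  lt_of_lt_of_eq (sig_lt (by rw [quad_len]; omega) hi) (len_swap p B C s).symm

lemma dep_symm {a b : Lbl T X} (h : Dep a b) : Dep b a := by
  rcases h with h | ⟨h1, h2⟩
  · exact Or.inl h.symm
  · exact Or.inr ⟨h1.symm, h2.symm⟩

lemma evAt_fst (w : Run T X) (i : Fin w.length) : (evAt w i).1 = w[(i : ℕ)] := rfl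

lemma evAt_swap (p B C s : Run T X) (hne : ∀ a ∈ B, ∀ b ∈ C, a ≠ b)
    (i : ℕ) (hi : i < (p ++ B ++ C ++ s).length) :
    evAt (p ++ C ++ B ++ s) ⟨sig p.length B.length C.length i, sig_lt' p B C s hi⟩ =
      evAt (p ++ B ++ C ++ s) ⟨i, hi⟩ := by
  have h1 := getElem_swap p B C s i hi
  have h2 := count_take_swap p B C s (fun a ha hb => hne a ha a hb rfl)
      (fun a ha hb => hne a hb a ha rfl) i hi
  unfold evAt
  simp only [List.get_eq_getElem]
  refine Prod.ext h1 ?_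
  rw [h1]; exact h2

lemma evBefore_swap (p B C s : Run T X) (hth : ThreadsDisjoint B C)
    {e f : Event T X} (hef : e.1.thread = f.1.thread)
    (h : EvBefore (p ++ B ++ C ++ s) e f) : EvBefore (p ++ C ++ B ++ s) e f := by
  obtain ⟨i, j, hij, hei, hfj⟩ := h
  have hne : ∀ a ∈ B, ∀ b ∈ C, a ≠ b := fun a ha b hb hab =>
    hth a ha b hb (by rw [hab])
  refine ⟨⟨sig p.length B.length C.length i.1, sig_lt' p B C s i.2⟩,
    ⟨sig p.length B.length C.length j.1, sig_lt' p B C s j.2⟩, ?_, ?_, ?_⟩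
  · by_cases hflip : p.length ≤ (i : ℕ) ∧ (i : ℕ) < p.length + B.length ∧
        p.length + B.length ≤ (j : ℕ) ∧ (j : ℕ) < p.length + B.length + C.length
    · exfalso
      have heB : e.1 ∈ B := by
        rw [← hei, evAt_fst, quad_get_B p B C s hflip.1 hflip.2.1]
        exact List.getElem_mem _
      have hfC : f.1 ∈ C := by
        rw [← hfj, evAt_fst, quad_get_C p B C s hflip.2.2.1 hflip.2.2.2]
        exact List.getElem_mem _
      exact hth e.1 heB f.1 hfC hef
    · exact sig_mono hij hflip
  · exact (evAt_swap p B C s hne i.1 i.2).trans hei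
  · exact (evAt_swap p B C s hne j.1 j.2).trans hfj

lemma perm_swap (p B C s : Run T X) : (p ++ B ++ C ++ s).Perm (p ++ C ++ B ++ s) := by
  have h : (p ++ (B ++ C ++ s)).Perm (p ++ (C ++ B ++ s)) :=
    List.Perm.append_left p ((List.perm_append_comm (l₁ := B) (l₂ := C)).append_right s)
  simpa [List.append_assoc] using h

/-- The key combinatorial condition sufficient for transferring the reads-from
relation across the swap of the two middle segments. -/
def RfKey (p B C s : Run T X) : Prop :=
  ∀ (i j : ℕ) (hi : i < (p ++ B ++ C ++ s).length) (hj : j < (p ++ B ++ C ++ s).length),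
    i < j → ((p ++ B ++ C ++ s)[i]'hi).op = Op.wr → ((p ++ B ++ C ++ s)[j]'hj).op = Op.rd →
    ((p ++ B ++ C ++ s)[i]'hi).var = ((p ++ B ++ C ++ s)[j]'hj).var →
    (∀ (k : ℕ) (hk : k < (p ++ B ++ C ++ s).length), i < k → k < j →
      ¬(((p ++ B ++ C ++ s)[k]'hk).op = Op.wr ∧
        ((p ++ B ++ C ++ s)[k]'hk).var = ((p ++ B ++ C ++ s)[j]'hj).var)) →
    sig p.length B.length C.length i < sig p.length B.length C.length j ∧
      ∀ (k' : ℕ) (hk' : k' < (p ++ C ++ B ++ s).length),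
        sig p.length B.length C.length i < k' → k' < sig p.length B.length C.length j →
        ¬(((p ++ C ++ B ++ s)[k']'hk').op = Op.wr ∧
          ((p ++ C ++ B ++ s)[k']'hk').var = ((p ++ B ++ C ++ s)[j]'hj).var)

lemma rf_swap_core (p B C s : Run T X) (hne : ∀ a ∈ B, ∀ b ∈ C, a ≠ b)
    (hkey : RfKey p B C s)
    {e f : Event T X} (h : rf (p ++ B ++ C ++ s) e f) : rf (p ++ C ++ B ++ s) e f := by
  obtain ⟨he, hf, hv, i, j, hei, hfj, hij, hmid⟩ := h
  have hei1 : e.1 = (p ++ B ++ C ++ s)[(i : ℕ)]'i.2 := by rw [← hei]; rfl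
  have hfj1 : f.1 = (p ++ B ++ C ++ s)[(j : ℕ)]'j.2 := by rw [← hfj]; rfl
  have hk := hkey i.1 j.1 i.2 j.2 hij (hei1 ▸ he) (hfj1 ▸ hf) (by rw [← hei1, ← hfj1]; exact hv)
      (fun k hk h1 h2 hc => hmid ⟨k, hk⟩ h1 h2 ⟨hc.1, by rw [hfj1]; exact hc.2⟩)
  refine ⟨he, hf, hv, ⟨sig p.length B.length C.length i.1, sig_lt' p B C s i.2⟩,
    ⟨sig p.length B.length C.length j.1, sig_lt' p B C s j.2⟩,
    (evAt_swap p B C s hne i.1 i.2).trans hei,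
    (evAt_swap p B C s hne j.1 j.2).trans hfj, hk.1, ?_⟩
  intro k h1 h2 hc
  exact hk.2 k.1 k.2 h1 h2 ⟨hc.1, by rw [← hfj1]; exact hc.2⟩

end SemanticSoundness


lemma cons_getElem_tail {α : Type*} {a : α} {l : List α} {d : ℕ} (hd : 0 < d)
    (h : d < (a :: l).length) : (a :: l)[d] ∈ l := by
  rcases d with _ | d
  · omega
  · simp only [List.getElem_cons_succ]; exact List.getElem_mem _

lemma hkey_block (p : Run T X) (b0 c0 : Lbl T X) (Bt Ct s : Run T X)
    (hb0 : b0.op = Op.wr) (hBt : ∀ l ∈ Bt, l.op = Op.rd ∧ l.var = b0.var)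
    (hc0 : c0.op = Op.wr) (hCt : ∀ l ∈ Ct, l.op = Op.rd ∧ l.var = c0.var)
    (hVB : ∀ (j : ℕ) (hj : j < (p ++ (b0 :: Bt) ++ (c0 :: Ct) ++ s).length),
      p.length + (b0 :: Bt).length ≤ j →
      ((p ++ (b0 :: Bt) ++ (c0 :: Ct) ++ s)[j]'hj).op = Op.rd →
      ((p ++ (b0 :: Bt) ++ (c0 :: Ct) ++ s)[j]'hj).var = b0.var →
      ∃ (k : ℕ) (hk : k < (p ++ (b0 :: Bt) ++ (c0 :: Ct) ++ s).length),
        p.length + (b0 :: Bt).length ≤ k ∧ k < j ∧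
        ((p ++ (b0 :: Bt) ++ (c0 :: Ct) ++ s)[k]'hk).op = Op.wr ∧
        ((p ++ (b0 :: Bt) ++ (c0 :: Ct) ++ s)[k]'hk).var = b0.var)
    (hVC : ∀ (j : ℕ) (hj : j < (p ++ (b0 :: Bt) ++ (c0 :: Ct) ++ s).length),
      p.length + (b0 :: Bt).length + (c0 :: Ct).length ≤ j →
      ((p ++ (b0 :: Bt) ++ (c0 :: Ct) ++ s)[j]'hj).op = Op.rd →
      ((p ++ (b0 :: Bt) ++ (c0 :: Ct) ++ s)[j]'hj).var = c0.var →
      ∃ (k : ℕ) (hk : k < (p ++ (b0 :: Bt) ++ (c0 :: Ct) ++ s).length),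
        p.length + (b0 :: Bt).length + (c0 :: Ct).length ≤ k ∧ k < j ∧
        ((p ++ (b0 :: Bt) ++ (c0 :: Ct) ++ s)[k]'hk).op = Op.wr ∧
        ((p ++ (b0 :: Bt) ++ (c0 :: Ct) ++ s)[k]'hk).var = c0.var) :
    RfKey p (b0 :: Bt) (c0 :: Ct) s := by
  intro i j hi hj hij hwi hrj hvar hmid
  have hn := quad_len p (b0 :: Bt) (c0 :: Ct) s
  have hmB : (b0 :: Bt).length = Bt.length + 1 := by simp
  have hmC : (c0 :: Ct).length = Ct.length + 1 := by simp
  have hBvar : ∀ l ∈ b0 :: Bt, l.var = b0.var := by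
    intro l hl
    rcases List.mem_cons.1 hl with h | h
    · rw [h]
    · exact (hBt l h).2
  have hCvar : ∀ l ∈ c0 :: Ct, l.var = c0.var := by
    intro l hl
    rcases List.mem_cons.1 hl with h | h
    · rw [h]
    · exact (hCt l h).2
  have hwP : ∀ (h : p.length < (p ++ (b0 :: Bt) ++ (c0 :: Ct) ++ s).length),
      (p ++ (b0 :: Bt) ++ (c0 :: Ct) ++ s)[p.length]'h = b0 := by
    intro h
    rw [quad_get_B p (b0 :: Bt) (c0 :: Ct) s le_rfl (by omega)]
    exact gec (l := b0 :: Bt) (show p.length - p.length = 0 by omega) (hj := Nat.succ_pos _)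
  have hwPm : ∀ (h : p.length + (b0 :: Bt).length <
        (p ++ (b0 :: Bt) ++ (c0 :: Ct) ++ s).length),
      (p ++ (b0 :: Bt) ++ (c0 :: Ct) ++ s)[p.length + (b0 :: Bt).length]'h = c0 := by
    intro h
    rw [quad_get_C p (b0 :: Bt) (c0 :: Ct) s le_rfl (by omega)]
    exact gec (l := c0 :: Ct) (show p.length + (b0 :: Bt).length - p.length - (b0 :: Bt).length = 0
      by omega) (hj := Nat.succ_pos _)
  have htailB : ∀ (k : ℕ) (hk : k < (p ++ (b0 :: Bt) ++ (c0 :: Ct) ++ s).length),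
      p.length < k → k < p.length + (b0 :: Bt).length →
      ((p ++ (b0 :: Bt) ++ (c0 :: Ct) ++ s)[k]'hk).op = Op.rd := by
    intro k hk h1 h2
    rw [quad_get_B p (b0 :: Bt) (c0 :: Ct) s (by omega) h2]
    exact (hBt _ (cons_getElem_tail (by omega) (by omega))).1
  have htailC : ∀ (k : ℕ) (hk : k < (p ++ (b0 :: Bt) ++ (c0 :: Ct) ++ s).length),
      p.length + (b0 :: Bt).length < k →
      k < p.length + (b0 :: Bt).length + (c0 :: Ct).length →
      ((p ++ (b0 :: Bt) ++ (c0 :: Ct) ++ s)[k]'hk).op = Op.rd := by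
    intro k hk h1 h2
    rw [quad_get_C p (b0 :: Bt) (c0 :: Ct) s (by omega) h2]
    exact (hCt _ (cons_getElem_tail (by omega) (by omega))).1
  have hmemB : ∀ (k : ℕ) (hk : k < (p ++ (b0 :: Bt) ++ (c0 :: Ct) ++ s).length),
      p.length ≤ k → k < p.length + (b0 :: Bt).length →
      ((p ++ (b0 :: Bt) ++ (c0 :: Ct) ++ s)[k]'hk).var = b0.var := by
    intro k hk h1 h2
    rw [quad_get_B p (b0 :: Bt) (c0 :: Ct) s h1 h2]
    exact hBvar _ (List.getElem_mem _)
  have hmemC : ∀ (k : ℕ) (hk : k < (p ++ (b0 :: Bt) ++ (c0 :: Ct) ++ s).length),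
      p.length + (b0 :: Bt).length ≤ k →
      k < p.length + (b0 :: Bt).length + (c0 :: Ct).length →
      ((p ++ (b0 :: Bt) ++ (c0 :: Ct) ++ s)[k]'hk).var = c0.var := by
    intro k hk h1 h2
    rw [quad_get_C p (b0 :: Bt) (c0 :: Ct) s h1 h2]
    exact hCvar _ (List.getElem_mem _)
  -- transfer of labels outside the swapped region
  have hidA : ∀ (k : ℕ) (hk : k < (p ++ (c0 :: Ct) ++ (b0 :: Bt) ++ s).length),
      k < p.length → (p ++ (c0 :: Ct) ++ (b0 :: Bt) ++ s)[k]'hk =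
        (p ++ (b0 :: Bt) ++ (c0 :: Ct) ++ s)[k]'(by rw [len_swap] at hk; exact hk) := by
    intro k hk h1
    rw [quad_get_A p (c0 :: Ct) (b0 :: Bt) s h1, quad_get_A p (b0 :: Bt) (c0 :: Ct) s h1]
  have hidS : ∀ (k : ℕ) (hk : k < (p ++ (c0 :: Ct) ++ (b0 :: Bt) ++ s).length),
      p.length + (b0 :: Bt).length + (c0 :: Ct).length ≤ k →
      (p ++ (c0 :: Ct) ++ (b0 :: Bt) ++ s)[k]'hk =
        (p ++ (b0 :: Bt) ++ (c0 :: Ct) ++ s)[k]'(by rw [len_swap] at hk; exact hk) := by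
    intro k hk h1
    rw [quad_get_S p (c0 :: Ct) (b0 :: Bt) s (by omega), quad_get_S p (b0 :: Bt) (c0 :: Ct) s
      (by omega)]
    exact gec (by omega)
  rcases lt_or_ge j p.length with hjA | hjA
  · -- the read is in the prefix
    have hiA : i < p.length := lt_trans hij hjA
    refine ⟨by rw [sig_A hiA, sig_A hjA]; exact hij, ?_⟩
    intro k' hk' h1 h2
    rw [sig_A hiA] at h1; rw [sig_A hjA] at h2
    rw [hidA k' hk' (lt_trans h2 hjA)]
    exact hmid k' _ h1 h2
  rcases lt_or_ge j (p.length + (b0 :: Bt).length) with hjB | hjB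
  · -- the read is in block B
    have hyB : ((p ++ (b0 :: Bt) ++ (c0 :: Ct) ++ s)[j]'hj).var = b0.var := hmemB j hj hjA hjB
    have hjP : p.length < j := by
      rcases eq_or_lt_of_le hjA with h | h
      · exfalso
        have hjb : (p ++ (b0 :: Bt) ++ (c0 :: Ct) ++ s)[j]'hj = b0 :=
          (gec h.symm).trans (hwP (by omega))
        rw [hjb] at hrj; rw [hrj] at hb0; exact Op.noConfusion hb0
      · exact h
    have hiP : p.length ≤ i := by
      by_contra hip
      push_neg at hip
      refine hmid p.length (by omega) hip hjP ⟨?_, ?_⟩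
      · rw [hwP (by omega)]; exact hb0
      · rw [hwP (by omega)]; exact hyB.symm
    refine ⟨by rw [sig_B hiP (by omega), sig_B hjA hjB]; omega, ?_⟩
    intro k' hk' h1 h2
    rw [sig_B hiP (by omega)] at h1; rw [sig_B hjA hjB] at h2
    have hw' : (p ++ (c0 :: Ct) ++ (b0 :: Bt) ++ s)[k']'hk' =
        (p ++ (b0 :: Bt) ++ (c0 :: Ct) ++ s)[k' - (c0 :: Ct).length]'(by
          rw [len_swap] at hk'; omega) := by
      rw [quad_get_C p (c0 :: Ct) (b0 :: Bt) s (by omega) (by omega),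
        quad_get_B p (b0 :: Bt) (c0 :: Ct) s (by omega) (by omega)]
      exact gec (by omega)
    rw [hw']
    exact hmid (k' - (c0 :: Ct).length) _ (by omega) (by omega)
  rcases lt_or_ge j (p.length + (b0 :: Bt).length + (c0 :: Ct).length) with hjC | hjC
  · -- the read is in block C
    have hyC : ((p ++ (b0 :: Bt) ++ (c0 :: Ct) ++ s)[j]'hj).var = c0.var := hmemC j hj hjB hjC
    have hjP : p.length + (b0 :: Bt).length < j := by
      rcases eq_or_lt_of_le hjB with h | h
      · exfalso
        have hjb : (p ++ (b0 :: Bt) ++ (c0 :: Ct) ++ s)[j]'hj = c0 :=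
          (gec h.symm).trans (hwPm (by omega))
        rw [hjb] at hrj; rw [hrj] at hc0; exact Op.noConfusion hc0
      · exact h
    have hiP : p.length + (b0 :: Bt).length ≤ i := by
      by_contra hip
      push_neg at hip
      refine hmid (p.length + (b0 :: Bt).length) (by omega) hip hjP ⟨?_, ?_⟩
      · rw [hwPm (by omega)]; exact hc0
      · rw [hwPm (by omega)]; exact hyC.symm
    refine ⟨by rw [sig_C hiP (by omega), sig_C hjB hjC]; omega, ?_⟩
    intro k' hk' h1 h2
    rw [sig_C hiP (by omega)] at h1; rw [sig_C hjB hjC] at h2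
    have hw' : (p ++ (c0 :: Ct) ++ (b0 :: Bt) ++ s)[k']'hk' =
        (p ++ (b0 :: Bt) ++ (c0 :: Ct) ++ s)[k' + (b0 :: Bt).length]'(by
          rw [len_swap] at hk'; omega) := by
      rw [quad_get_B p (c0 :: Ct) (b0 :: Bt) s (by omega) (by omega),
        quad_get_C p (b0 :: Bt) (c0 :: Ct) s (by omega) (by omega)]
      exact gec (by omega)
    rw [hw']
    exact hmid (k' + (b0 :: Bt).length) _ (by omega) (by omega)
  · -- the read is in the suffix
    have hsigj : sig p.length (b0 :: Bt).length (c0 :: Ct).length j = j := sig_S hjC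
    have hfin : p.length + (b0 :: Bt).length + (c0 :: Ct).length ≤ i →
        sig p.length (b0 :: Bt).length (c0 :: Ct).length i < sig p.length (b0 :: Bt).length
            (c0 :: Ct).length j ∧
          ∀ (k' : ℕ) (hk' : k' < (p ++ (c0 :: Ct) ++ (b0 :: Bt) ++ s).length),
            sig p.length (b0 :: Bt).length (c0 :: Ct).length i < k' →
            k' < sig p.length (b0 :: Bt).length (c0 :: Ct).length j →
            ¬(((p ++ (c0 :: Ct) ++ (b0 :: Bt) ++ s)[k']'hk').op = Op.wr ∧
              ((p ++ (c0 :: Ct) ++ (b0 :: Bt) ++ s)[k']'hk').var =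
                ((p ++ (b0 :: Bt) ++ (c0 :: Ct) ++ s)[j]'hj).var) := by
      intro hiS
      refine ⟨by rw [sig_S hiS, hsigj]; exact hij, ?_⟩
      intro k' hk' h1 h2
      rw [sig_S hiS] at h1; rw [hsigj] at h2
      rw [hidS k' hk' (by omega)]
      exact hmid k' _ h1 h2
    by_cases hyb : ((p ++ (b0 :: Bt) ++ (c0 :: Ct) ++ s)[j]'hj).var = b0.var
    · obtain ⟨q, hq, hq1, hq2, hq3, hq4⟩ := hVB j hj (by omega) hrj hyb
      have hqi : q ≤ i := by
        by_contra hqi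
        push_neg at hqi
        exact hmid q hq hqi hq2 ⟨hq3, hq4.trans hyb.symm⟩
      apply hfin
      rcases lt_or_ge i (p.length + (b0 :: Bt).length + (c0 :: Ct).length) with hiC | hiS
      · exfalso
        rcases eq_or_lt_of_le (show p.length + (b0 :: Bt).length ≤ i by omega) with hie | hie
        · -- e is the head write of C, so the two blocks share the variable
          have hic : (p ++ (b0 :: Bt) ++ (c0 :: Ct) ++ s)[i]'hi = c0 :=
            (gec hie.symm).trans (hwPm (by omega))
          have hcb : c0.var = b0.var := by
            rw [← hyb, ← hvar, hic]
          obtain ⟨q2, hq2', hq21, hq22, hq23, hq24⟩ := hVC j hj (by omega) hrj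
            (hyb.trans hcb.symm)
          exact hmid q2 hq2' (by omega) hq22 ⟨hq23, hq24.trans (hcb.trans hyb.symm)⟩
        · -- e would be a read in the tail of C
          rw [htailC i hi hie hiC] at hwi
          exact Op.noConfusion hwi
      · exact hiS
    · by_cases hyc : ((p ++ (b0 :: Bt) ++ (c0 :: Ct) ++ s)[j]'hj).var = c0.var
      · obtain ⟨q, hq, hq1, hq2, hq3, hq4⟩ := hVC j hj (by omega) hrj hyc
        have hqi : q ≤ i := by
          by_contra hqi
          push_neg at hqi
          exact hmid q hq hqi hq2 ⟨hq3, hq4.trans hyc.symm⟩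
        exact hfin (by omega)
      · -- the variable of f is foreign to both blocks
        have hiAS : i < p.length ∨ p.length + (b0 :: Bt).length + (c0 :: Ct).length ≤ i := by
          by_contra hcon
          push_neg at hcon
          obtain ⟨hc1, hc2⟩ := hcon
          rcases lt_or_ge i (p.length + (b0 :: Bt).length) with h | h
          · exact hyb (hvar.symm.trans (hmemB i hi (by omega) h) ▸ rfl)
          · exact hyc (hvar.symm.trans (hmemC i hi h (by omega)) ▸ rfl)
        have hsigi : sig p.length (b0 :: Bt).length (c0 :: Ct).length i = i := by
          rcases hiAS with h | h
          · exact sig_A h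
          · exact sig_S h
        refine ⟨by rw [hsigi, hsigj]; exact hij, ?_⟩
        intro k' hk' h1 h2
        rw [hsigi] at h1; rw [hsigj] at h2
        rcases lt_or_ge k' p.length with hA | hk1
        · rw [hidA k' hk' hA]; exact hmid k' _ h1 h2
        rcases lt_or_ge k' (p.length + (c0 :: Ct).length) with hCreg | hk2
        · -- this position holds an element of C, whose variable is foreign
          rintro ⟨-, hcv⟩
          have : (p ++ (c0 :: Ct) ++ (b0 :: Bt) ++ s)[k']'hk' ∈ c0 :: Ct := by
            rw [quad_get_B p (c0 :: Ct) (b0 :: Bt) s hk1 hCreg]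
            exact List.getElem_mem _
          exact hyc (hcv ▸ hCvar _ this)
        rcases lt_or_ge k' (p.length + (c0 :: Ct).length + (b0 :: Bt).length) with hBreg | hk3
        · rintro ⟨-, hbv⟩
          have : (p ++ (c0 :: Ct) ++ (b0 :: Bt) ++ s)[k']'hk' ∈ b0 :: Bt := by
            rw [quad_get_C p (c0 :: Ct) (b0 :: Bt) s hk2 hBreg]
            exact List.getElem_mem _
          exact hyb (hbv ▸ hBvar _ this)
        · rw [hidS k' hk' (by omega)]; exact hmid k' _ h1 h2


lemma hkey_single (p s : Run T X) (a b : Lbl T X)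
    (h : a.var ≠ b.var ∨ (a.op = Op.rd ∧ b.op = Op.rd)) :
    RfKey p [a] [b] s := by
  intro i j hi hj hij hwi hrj hvar hmid
  have hn := quad_len p [a] [b] s
  have hla : ([a] : Run T X).length = 1 := rfl
  have hlb : ([b] : Run T X).length = 1 := rfl
  have hwP : ∀ (hk : p.length < (p ++ [a] ++ [b] ++ s).length),
      (p ++ [a] ++ [b] ++ s)[p.length]'hk = a := by
    intro hk
    rw [quad_get_B p [a] [b] s le_rfl (by omega)]
    exact gec (l := [a]) (show p.length - p.length = 0 by omega) (hj := Nat.one_pos)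
  have hwP1 : ∀ (hk : p.length + 1 < (p ++ [a] ++ [b] ++ s).length),
      (p ++ [a] ++ [b] ++ s)[p.length + 1]'hk = b := by
    intro hk
    rw [quad_get_C p [a] [b] s (by omega) (by omega)]
    exact gec (l := [b]) (show p.length + 1 - p.length - ([a] : Run T X).length = 0 by omega)
      (hj := Nat.one_pos)
  have hw'P : ∀ (hk : p.length < (p ++ [b] ++ [a] ++ s).length),
      (p ++ [b] ++ [a] ++ s)[p.length]'hk = b := by
    intro hk
    rw [quad_get_B p [b] [a] s le_rfl (by omega)]
    exact gec (l := [b]) (show p.length - p.length = 0 by omega) (hj := Nat.one_pos)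
  have hw'P1 : ∀ (hk : p.length + 1 < (p ++ [b] ++ [a] ++ s).length),
      (p ++ [b] ++ [a] ++ s)[p.length + 1]'hk = a := by
    intro hk
    rw [quad_get_C p [b] [a] s (by omega) (by omega)]
    exact gec (l := [a]) (show p.length + 1 - p.length - ([b] : Run T X).length = 0 by omega)
      (hj := Nat.one_pos)
  have hidA : ∀ (k : ℕ) (hk : k < (p ++ [b] ++ [a] ++ s).length), k < p.length →
      (p ++ [b] ++ [a] ++ s)[k]'hk =
        (p ++ [a] ++ [b] ++ s)[k]'(by rw [len_swap] at hk; exact hk) := by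
    intro k hk h1
    rw [quad_get_A p [b] [a] s h1, quad_get_A p [a] [b] s h1]
  have hidS : ∀ (k : ℕ) (hk : k < (p ++ [b] ++ [a] ++ s).length), p.length + 2 ≤ k →
      (p ++ [b] ++ [a] ++ s)[k]'hk =
        (p ++ [a] ++ [b] ++ s)[k]'(by rw [len_swap] at hk; exact hk) := by
    intro k hk h1
    rw [quad_get_S p [b] [a] s (by omega), quad_get_S p [a] [b] s (by omega)]
    exact gec (by omega)
  rcases lt_or_ge j p.length with hjA | hjA
  · have hiA : i < p.length := lt_trans hij hjA
    refine ⟨by rw [sig_A hiA, sig_A hjA]; exact hij, ?_⟩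
    intro k' hk' h1 h2
    rw [sig_A hiA] at h1; rw [sig_A hjA] at h2
    rw [hidA k' hk' (by omega)]
    exact hmid k' _ h1 h2
  rcases eq_or_lt_of_le hjA with hjP | hjP
  · -- j = p.length, the read is `a`
    subst hjP
    have hiA : i < p.length := hij
    refine ⟨by rw [sig_A hiA, sig_B le_rfl (by omega)]; omega, ?_⟩
    intro k' hk' h1 h2
    rw [sig_A hiA] at h1; rw [sig_B le_rfl (by omega)] at h2
    rcases lt_or_ge k' p.length with hA | hB
    · rw [hidA k' hk' hA]; exact hmid k' _ h1 hA
    · have hkb : (p ++ [b] ++ [a] ++ s)[k']'hk' = b :=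
        (gec (show k' = p.length by omega)).trans (hw'P (by omega))
      rw [hkb, hwP (by omega)]
      rintro ⟨hbw, hbv⟩
      rcases h with hv | ⟨-, hbr⟩
      · exact hv hbv.symm
      · rw [hbr] at hbw; exact Op.noConfusion hbw
  rcases eq_or_lt_of_le (show p.length + 1 ≤ j by omega) with hjP1 | hjP1
  · -- j = p.length + 1, the read is `b`
    subst hjP1
    have hjb := hwP1 hj
    have hiP : i ≠ p.length := by
      intro he
      have hia : (p ++ [a] ++ [b] ++ s)[i]'hi = a := (gec he).trans (hwP (by omega))
      rcases h with hv | ⟨har, -⟩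
      · rw [hia, hjb] at hvar; exact hv hvar
      · rw [hia, har] at hwi; exact Op.noConfusion hwi
    have hiA : i < p.length := by omega
    refine ⟨by rw [sig_A hiA, sig_C (by omega) (by omega)]; omega, ?_⟩
    intro k' hk' h1 h2
    rw [sig_A hiA] at h1; rw [sig_C (by omega) (by omega)] at h2
    have hA : k' < p.length := by omega
    rw [hidA k' hk' hA]
    exact hmid k' _ h1 (by omega)
  · -- j ≥ p.length + 2, the read is in the suffix
    have hsigj : sig p.length ([a] : Run T X).length ([b] : Run T X).length j = j :=
      sig_S (by omega)
    rcases lt_or_ge i p.length with hiA | hiP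
    · refine ⟨by rw [sig_A hiA, hsigj]; omega, ?_⟩
      intro k' hk' h1 h2
      rw [sig_A hiA] at h1; rw [hsigj] at h2
      rcases lt_or_ge k' p.length with hA | h3
      · rw [hidA k' hk' hA]; exact hmid k' _ h1 h2
      rcases eq_or_lt_of_le h3 with he | h4
      · have hkb : (p ++ [b] ++ [a] ++ s)[k']'hk' = b := (gec he.symm).trans (hw'P (by omega))
        have hmm := hmid (p.length + 1) (by omega) (by omega) (by omega)
        rw [hwP1 (by omega)] at hmm
        rw [hkb]; exact hmm
      rcases eq_or_lt_of_le (show p.length + 1 ≤ k' by omega) with he1 | h5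
      · have hka : (p ++ [b] ++ [a] ++ s)[k']'hk' = a := (gec he1.symm).trans (hw'P1 (by omega))
        have hmm := hmid p.length (by omega) (by omega) (by omega)
        rw [hwP (by omega)] at hmm
        rw [hka]; exact hmm
      · rw [hidS k' hk' (by omega)]; exact hmid k' _ (by omega) h2
    rcases eq_or_lt_of_le hiP with hie | hiP1
    · -- i = p.length
      subst hie
      refine ⟨by rw [sig_B le_rfl (by omega), hsigj]; omega, ?_⟩
      intro k' hk' h1 h2
      rw [sig_B le_rfl (by omega)] at h1; rw [hsigj] at h2
      rw [hidS k' hk' (by omega)]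
      exact hmid k' _ (by omega) h2
    rcases eq_or_lt_of_le (show p.length + 1 ≤ i by omega) with hie1 | hiP2
    · -- i = p.length + 1, the write is `b`
      subst hie1
      have hib := hwP1 hi
      refine ⟨by rw [sig_C (by omega) (by omega), hsigj]; omega, ?_⟩
      intro k' hk' h1 h2
      rw [sig_C (by omega) (by omega)] at h1; rw [hsigj] at h2
      rcases eq_or_lt_of_le (show p.length + 1 ≤ k' by omega) with he1 | h5
      · have hka : (p ++ [b] ++ [a] ++ s)[k']'hk' = a := (gec he1.symm).trans (hw'P1 (by omega))
        rw [hka]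
        rintro ⟨haw, hav⟩
        rcases h with hv | ⟨har, -⟩
        · rw [hib] at hvar; exact hv (hav.trans hvar.symm)
        · rw [har] at haw; exact Op.noConfusion haw
      · rw [hidS k' hk' (by omega)]; exact hmid k' _ (by omega) h2
    · have hsigi : sig p.length ([a] : Run T X).length ([b] : Run T X).length i = i :=
        sig_S (by omega)
      refine ⟨by rw [hsigi, hsigj]; exact hij, ?_⟩
      intro k' hk' h1 h2
      rw [hsigi] at h1; rw [hsigj] at h2
      rw [hidS k' hk' (by omega)]
      exact hmid k' _ h1 h2


lemma threadsDisjoint_symm {B C : Run T X} (h : ThreadsDisjoint B C) : ThreadsDisjoint C B :=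
  fun x hx y hy => (h y hy x hx).symm

lemma po_swap (p B C s : Run T X) (hth : ThreadsDisjoint B C) :
    po (p ++ B ++ C ++ s) = po (p ++ C ++ B ++ s) := by
  funext e f
  apply propext
  constructor
  · rintro ⟨h1, h2⟩; exact ⟨h1, evBefore_swap p B C s hth h1 h2⟩
  · rintro ⟨h1, h2⟩; exact ⟨h1, evBefore_swap p C B s (threadsDisjoint_symm hth) h1 h2⟩

lemma rf_swap (p B C s : Run T X) (hne : ∀ x ∈ B, ∀ y ∈ C, x ≠ y)
    (hk1 : RfKey p B C s) (hk2 : RfKey p C B s) :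
    rf (p ++ B ++ C ++ s) = rf (p ++ C ++ B ++ s) := by
  funext e f
  apply propext
  exact ⟨rf_swap_core p B C s hne hk1,
    rf_swap_core p C B s (fun x hx y hy hxy => (hne y hy x hx) hxy.symm) hk2⟩

lemma rfEquiv_refl (w : Run T X) : RfEquiv w w := ⟨List.Perm.refl w, rfl, rfl⟩

lemma rfEquiv_trans {u v w : Run T X} (h1 : RfEquiv u v) (h2 : RfEquiv v w) : RfEquiv u w :=
  ⟨h1.1.trans h2.1, h1.2.1.trans h2.2.1, h1.2.2.trans h2.2.2⟩

lemma blkswap_rfEquiv {w w' : Run T X} (h : BlkSwap w w') : RfEquiv w w' := by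
  cases h with
  | block p B C s hB hC hd =>
    obtain ⟨b0, Bt, hBd, hb0, hBt, hVB0⟩ := hB
    obtain ⟨c0, Ct, hCd, hc0, hCt, hVC0⟩ := hC
    subst hBd; subst hCd
    have hn := quad_len p (b0 :: Bt) (c0 :: Ct) s
    have hcs : ((c0 :: Ct) ++ s).length = (c0 :: Ct).length + s.length := by simp; omega
    have hBvar : ∀ l ∈ b0 :: Bt, l.var = b0.var := by
      intro l hl
      rcases List.mem_cons.1 hl with hx | hx
      · rw [hx]
      · exact (hBt l hx).2
    have hCvar : ∀ l ∈ c0 :: Ct, l.var = c0.var := by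
      intro l hl
      rcases List.mem_cons.1 hl with hx | hx
      · rw [hx]
      · exact (hCt l hx).2
    -- index form of the validity of B w.r.t. its suffix
    have hVB : ∀ (j : ℕ) (hj : j < (p ++ (b0 :: Bt) ++ (c0 :: Ct) ++ s).length),
        p.length + (b0 :: Bt).length ≤ j →
        ((p ++ (b0 :: Bt) ++ (c0 :: Ct) ++ s)[j]'hj).op = Op.rd →
        ((p ++ (b0 :: Bt) ++ (c0 :: Ct) ++ s)[j]'hj).var = b0.var →
        ∃ (k : ℕ) (hk : k < (p ++ (b0 :: Bt) ++ (c0 :: Ct) ++ s).length),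
          p.length + (b0 :: Bt).length ≤ k ∧ k < j ∧
          ((p ++ (b0 :: Bt) ++ (c0 :: Ct) ++ s)[k]'hk).op = Op.wr ∧
          ((p ++ (b0 :: Bt) ++ (c0 :: Ct) ++ s)[k]'hk).var = b0.var := by
      intro j hj hge hr hv
      have hj' : j - p.length - (b0 :: Bt).length < ((c0 :: Ct) ++ s).length := by
        rw [quad_len] at hj; omega
      have he := quad_get_CS p (b0 :: Bt) (c0 :: Ct) s hge hj
      obtain ⟨m0, hm0, hm1, hm2⟩ := hVB0 ⟨j - p.length - (b0 :: Bt).length, hj'⟩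
        (by show (((c0 :: Ct) ++ s)[j - p.length - (b0 :: Bt).length]'hj').op = Op.rd
            rw [← he]; exact hr)
        (by show (((c0 :: Ct) ++ s)[j - p.length - (b0 :: Bt).length]'hj').var = b0.var
            rw [← he]; exact hv)
      have hm2' := m0.2
      have hm0' : (m0 : ℕ) < j - p.length - (b0 :: Bt).length := hm0
      have hek : (p ++ (b0 :: Bt) ++ (c0 :: Ct) ++ s)[p.length + (b0 :: Bt).length + m0.1]'(by
            rw [quad_len]; omega) = ((c0 :: Ct) ++ s)[m0.1]'m0.2 :=
        (quad_get_CS p (b0 :: Bt) (c0 :: Ct) s (by omega) (by rw [quad_len]; omega)).trans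
          (gec (by omega))
      refine ⟨p.length + (b0 :: Bt).length + m0.1, by rw [quad_len]; omega, by omega,
        by omega, ?_, ?_⟩
      · rw [hek]; exact hm1
      · rw [hek]; exact hm2
    -- index form of the validity of C w.r.t. its suffix
    have hVC : ∀ (j : ℕ) (hj : j < (p ++ (b0 :: Bt) ++ (c0 :: Ct) ++ s).length),
        p.length + (b0 :: Bt).length + (c0 :: Ct).length ≤ j →
        ((p ++ (b0 :: Bt) ++ (c0 :: Ct) ++ s)[j]'hj).op = Op.rd →
        ((p ++ (b0 :: Bt) ++ (c0 :: Ct) ++ s)[j]'hj).var = c0.var →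
        ∃ (k : ℕ) (hk : k < (p ++ (b0 :: Bt) ++ (c0 :: Ct) ++ s).length),
          p.length + (b0 :: Bt).length + (c0 :: Ct).length ≤ k ∧ k < j ∧
          ((p ++ (b0 :: Bt) ++ (c0 :: Ct) ++ s)[k]'hk).op = Op.wr ∧
          ((p ++ (b0 :: Bt) ++ (c0 :: Ct) ++ s)[k]'hk).var = c0.var := by
      intro j hj hge hr hv
      have hj' : j - p.length - (b0 :: Bt).length - (c0 :: Ct).length < s.length := by
        rw [quad_len] at hj; omega
      have he := quad_get_S p (b0 :: Bt) (c0 :: Ct) s hge hj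
      obtain ⟨m0, hm0, hm1, hm2⟩ := hVC0
        ⟨j - p.length - (b0 :: Bt).length - (c0 :: Ct).length, hj'⟩
        (by show (s[j - p.length - (b0 :: Bt).length - (c0 :: Ct).length]'hj').op = Op.rd
            rw [← he]; exact hr)
        (by show (s[j - p.length - (b0 :: Bt).length - (c0 :: Ct).length]'hj').var = c0.var
            rw [← he]; exact hv)
      have hm2' := m0.2
      have hm0' : (m0 : ℕ) < j - p.length - (b0 :: Bt).length - (c0 :: Ct).length := hm0
      have hek : (p ++ (b0 :: Bt) ++ (c0 :: Ct) ++ s)[p.length + (b0 :: Bt).length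
            + (c0 :: Ct).length + m0.1]'(by rw [quad_len]; omega) = s[m0.1]'m0.2 :=
        (quad_get_S p (b0 :: Bt) (c0 :: Ct) s (by omega) (by rw [quad_len]; omega)).trans
          (gec (by omega))
      refine ⟨p.length + (b0 :: Bt).length + (c0 :: Ct).length + m0.1, by rw [quad_len]; omega,
        by omega, by omega, ?_, ?_⟩
      · rw [hek]; exact hm1
      · rw [hek]; exact hm2
    -- identity of labels on the common suffix
    have hid : ∀ (k : ℕ) (hk : k < (p ++ (c0 :: Ct) ++ (b0 :: Bt) ++ s).length),
        p.length + (b0 :: Bt).length + (c0 :: Ct).length ≤ k →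
        (p ++ (c0 :: Ct) ++ (b0 :: Bt) ++ s)[k]'hk =
          (p ++ (b0 :: Bt) ++ (c0 :: Ct) ++ s)[k]'(by rw [len_swap] at hk; exact hk) := by
      intro k hk h1
      rw [quad_get_S p (c0 :: Ct) (b0 :: Bt) s (by omega),
        quad_get_S p (b0 :: Bt) (c0 :: Ct) s (by omega)]
      exact gec (by omega)
    -- validity of C as leading block in the swapped run
    have hVB' : ∀ (j : ℕ) (hj : j < (p ++ (c0 :: Ct) ++ (b0 :: Bt) ++ s).length),
        p.length + (c0 :: Ct).length ≤ j →
        ((p ++ (c0 :: Ct) ++ (b0 :: Bt) ++ s)[j]'hj).op = Op.rd →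
        ((p ++ (c0 :: Ct) ++ (b0 :: Bt) ++ s)[j]'hj).var = c0.var →
        ∃ (k : ℕ) (hk : k < (p ++ (c0 :: Ct) ++ (b0 :: Bt) ++ s).length),
          p.length + (c0 :: Ct).length ≤ k ∧ k < j ∧
          ((p ++ (c0 :: Ct) ++ (b0 :: Bt) ++ s)[k]'hk).op = Op.wr ∧
          ((p ++ (c0 :: Ct) ++ (b0 :: Bt) ++ s)[k]'hk).var = c0.var := by
      intro j hj hge hr hv
      have hj2 : j < (p ++ (b0 :: Bt) ++ (c0 :: Ct) ++ s).length := by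
        rw [len_swap] at hj; exact hj
      rcases lt_or_ge j (p.length + (c0 :: Ct).length + (b0 :: Bt).length) with hjB | hjS
      · -- j sits inside block B; the blocks share the variable and the head of B works
        have hmem : (p ++ (c0 :: Ct) ++ (b0 :: Bt) ++ s)[j]'hj ∈ b0 :: Bt := by
          rw [quad_get_C p (c0 :: Ct) (b0 :: Bt) s hge hjB]
          exact List.getElem_mem _
        have hcb : b0.var = c0.var := (hBvar _ hmem).symm.trans hv
        have hhead : ∀ (hx : p.length + (c0 :: Ct).length <
              (p ++ (c0 :: Ct) ++ (b0 :: Bt) ++ s).length),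
            (p ++ (c0 :: Ct) ++ (b0 :: Bt) ++ s)[p.length + (c0 :: Ct).length]'hx = b0 := by
          intro hx
          rw [quad_get_C p (c0 :: Ct) (b0 :: Bt) s le_rfl (by omega)]
          exact gec (l := b0 :: Bt)
            (show p.length + (c0 :: Ct).length - p.length - (c0 :: Ct).length = 0 by omega)
            (hj := Nat.succ_pos _)
        have hjne : p.length + (c0 :: Ct).length < j := by
          rcases eq_or_lt_of_le hge with hx | hx
          · exfalso
            have hjb : (p ++ (c0 :: Ct) ++ (b0 :: Bt) ++ s)[j]'hj = b0 :=
              (gec hx.symm).trans (hhead (by omega))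
            rw [hjb] at hr; rw [hr] at hb0; exact Op.noConfusion hb0
          · exact hx
        refine ⟨p.length + (c0 :: Ct).length, by omega, le_rfl, hjne, ?_, ?_⟩
        · rw [hhead (by omega)]; exact hb0
        · rw [hhead (by omega)]; exact hcb
      · -- j sits in the common suffix; use the validity of C in the original run
        have hidj := hid j hj (by omega)
        obtain ⟨k, hk, hk1, hk2, hk3, hk4⟩ := hVC j hj2 (by omega)
          (by rw [← hidj]; exact hr) (by rw [← hidj]; exact hv)
        refine ⟨k, by rw [len_swap]; exact hk, by omega, hk2, ?_, ?_⟩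
        · rw [hid k (by rw [len_swap]; exact hk) (by omega)]; exact hk3
        · rw [hid k (by rw [len_swap]; exact hk) (by omega)]; exact hk4
    -- validity of B w.r.t. suffix s in the swapped run
    have hVC' : ∀ (j : ℕ) (hj : j < (p ++ (c0 :: Ct) ++ (b0 :: Bt) ++ s).length),
        p.length + (c0 :: Ct).length + (b0 :: Bt).length ≤ j →
        ((p ++ (c0 :: Ct) ++ (b0 :: Bt) ++ s)[j]'hj).op = Op.rd →
        ((p ++ (c0 :: Ct) ++ (b0 :: Bt) ++ s)[j]'hj).var = b0.var →
        ∃ (k : ℕ) (hk : k < (p ++ (c0 :: Ct) ++ (b0 :: Bt) ++ s).length),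
          p.length + (c0 :: Ct).length + (b0 :: Bt).length ≤ k ∧ k < j ∧
          ((p ++ (c0 :: Ct) ++ (b0 :: Bt) ++ s)[k]'hk).op = Op.wr ∧
          ((p ++ (c0 :: Ct) ++ (b0 :: Bt) ++ s)[k]'hk).var = b0.var := by
      intro j hj hge hr hv
      have hj2 : j < (p ++ (b0 :: Bt) ++ (c0 :: Ct) ++ s).length := by
        rw [len_swap] at hj; exact hj
      have hidj := hid j hj (by omega)
      obtain ⟨k, hk, hk1, hk2, hk3, hk4⟩ := hVB j hj2 (by omega)
        (by rw [← hidj]; exact hr) (by rw [← hidj]; exact hv)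
      rcases lt_or_ge k (p.length + (b0 :: Bt).length + (c0 :: Ct).length) with hkC | hkS
      · -- the produced write lies in block C: the blocks share the variable
        have hmem : (p ++ (b0 :: Bt) ++ (c0 :: Ct) ++ s)[k]'hk ∈ c0 :: Ct := by
          rw [quad_get_C p (b0 :: Bt) (c0 :: Ct) s hk1 hkC]
          exact List.getElem_mem _
        have hcb : c0.var = b0.var := (hCvar _ hmem).symm.trans hk4
        obtain ⟨k2, hk2', h21, h22, h23, h24⟩ := hVC j hj2 (by omega)
          (by rw [← hidj]; exact hr) (by rw [← hidj, hv]; exact hcb.symm)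
        refine ⟨k2, by rw [len_swap]; exact hk2', by omega, h22, ?_, ?_⟩
        · rw [hid k2 (by rw [len_swap]; exact hk2') (by omega)]; exact h23
        · rw [hid k2 (by rw [len_swap]; exact hk2') (by omega)]; exact h24.trans hcb
      · refine ⟨k, by rw [len_swap]; exact hk, by omega, hk2, ?_, ?_⟩
        · rw [hid k (by rw [len_swap]; exact hk) hkS]; exact hk3
        · rw [hid k (by rw [len_swap]; exact hk) hkS]; exact hk4
    have hne : ∀ x ∈ (b0 :: Bt), ∀ y ∈ (c0 :: Ct), x ≠ y := fun x hx y hy hxy =>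
      hd x hx y hy (by rw [hxy])
    exact ⟨perm_swap p (b0 :: Bt) (c0 :: Ct) s, po_swap p (b0 :: Bt) (c0 :: Ct) s hd,
      rf_swap p (b0 :: Bt) (c0 :: Ct) s hne
        (hkey_block p b0 c0 Bt Ct s hb0 hBt hc0 hCt hVB hVC)
        (hkey_block p c0 b0 Ct Bt s hc0 hCt hb0 hBt hVB' hVC')⟩
  | single p s a b ht hvv =>
    have he1 : p ++ a :: b :: s = p ++ [a] ++ [b] ++ s := by simp
    have he2 : p ++ b :: a :: s = p ++ [b] ++ [a] ++ s := by simp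
    rw [he1, he2]
    have hth : ThreadsDisjoint [a] [b] := by
      intro x hx y hy
      simp only [List.mem_singleton] at hx hy
      rw [hx, hy]; exact ht
    have hne : ∀ x ∈ ([a] : Run T X), ∀ y ∈ ([b] : Run T X), x ≠ y := fun x hx y hy hxy =>
      hth x hx y hy (by rw [hxy])
    exact ⟨perm_swap p [a] [b] s, po_swap p [a] [b] s hth,
      rf_swap p [a] [b] s hne (hkey_single p s a b hvv)
        (hkey_single p s b a (hvv.imp Ne.symm And.symm))⟩

/-- Semantic Soundness: block equivalence lies between trace
equivalence and reads-from equivalence. -/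
theorem block_equiv_between_maz_and_rf
    (T X : Type) [DecidableEq T] [DecidableEq X]
    (u v : Run T X) (hu : WellFormed u) (hv : WellFormed v) :
    (MazEquiv u v → BlkEquiv u v) ∧ (BlkEquiv u v → RfEquiv u v) := by
  constructor
  · intro h
    have key : ∀ x y : Run T X, MazSwap x y → BlkSwap x y := by
      rintro x y ⟨u', v', a, b, hd⟩
      have ht : a.thread ≠ b.thread := fun hc => hd (Or.inl hc)
      have h2 : a.var ≠ b.var ∨ (a.op = Op.rd ∧ b.op = Op.rd) := by
        by_cases hvv : a.var = b.var
        · refine Or.inr ⟨?_, ?_⟩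
          · cases hop : a.op
            · rfl
            · exact absurd (Or.inr ⟨hvv, Or.inl hop⟩) hd
          · cases hop : b.op
            · rfl
            · exact absurd (Or.inr ⟨hvv, Or.inr hop⟩) hd
        · exact Or.inl hvv
      exact BlkSwap.single u' v' a b ht h2
    have symmMaz : ∀ x y : Run T X, MazSwap x y → MazSwap y x := by
      rintro x y ⟨u', v', a, b, hd⟩
      exact MazSwap.swap u' v' b a (fun hdep => hd (dep_symm hdep))
    have h' : Relation.EqvGen MazSwap u v := h
    clear h hu hv
    have main : BlkEquiv u v ∧ BlkEquiv v u := by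
      induction h' with
      | rel x y hr => exact ⟨Relation.ReflTransGen.single (key _ _ hr),
          Relation.ReflTransGen.single (key _ _ (symmMaz _ _ hr))⟩
      | refl => exact ⟨Relation.ReflTransGen.refl, Relation.ReflTransGen.refl⟩
      | symm x y _ ih => exact ⟨ih.2, ih.1⟩
      | trans x y z _ _ ih1 ih2 => exact ⟨ih1.1.trans ih2.1, ih2.2.trans ih1.2⟩
    exact main.1
  · intro h
    have h' : Relation.ReflTransGen BlkSwap u v := h
    clear h hu hv
    induction h' with
    | refl => exact rfEquiv_refl u
    | tail _ hstep ih => exact rfEquiv_trans ih (blkswap_rfEquiv hstep)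

end TraceTheory
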